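/- arXiv:2601.07764 — 4 statements merged into one kernel-verified Lean document; each statement's English description precedes it below -/
import Mathlib

section
/- Optimal splitting proportion under the point-mass prior: Let a, c > 0 and define J(π) := π(1−π)/(aπ + c) for π ∈ (0,1). Then J attains a unique maximum on (0,1), at π* = (√(c(c+a)) − c)/a. Moreover, writing τ² := a/(a+c) ∈ (0,1), this maximizer equals π* = √(1−τ²)/(1 + √(1−τ²)). Consequently, the function f(π) := √(1−π)·h²γ/√(h²γ² + c/π) on (0,1), with a = h²γ², is uniquely maximized at the same π*. -/
/-!
Writing `s = √(c(c+a))`, so that `aπ* + c = s`, completing the square gives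
`J(π) = (a + 2c − 2s)/a² − (aπ + c − s)²/(a²(aπ + c))`: on `aπ + c > 0` the function
`J` lies strictly below its value at `π*` except at `π*` itself. The `τ`-form of `π*` is
`√c/(√(c+a) + √c)` after rationalising, and `f = h²γ·√J` on `(0,1)`, so `f` has the same
unique maximizer.
-/

/-- The objective `J(π) = π(1−π)/(aπ+c)`. -/
noncomputable def Jobj (a c π : ℝ) : ℝ := π * (1 - π) / (a * π + c)

/-- The split-power objective `f(π) = √(1−π)·h²γ/√(h²γ² + c/π)`. -/
noncomputable def fobj (h γ c π : ℝ) : ℝ :=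
  Real.sqrt (1 - π) * h ^ 2 * γ / Real.sqrt (h ^ 2 * γ ^ 2 + c / π)

/-- The claimed optimal splitting proportion `π* = (√(c(c+a)) − c)/a`. -/
noncomputable def piStar (a c : ℝ) : ℝ := (Real.sqrt (c * (c + a)) - c) / a

open Set

section
variable {a c : ℝ}

theorem mul_piStar_add (ha : a ≠ 0) : a * piStar a c + c = √(c * (c + a)) := by
  rw [piStar]; field_simp; ring

theorem sqrt_mul_add_mem_Ioo (ha : 0 < a) (hc : 0 < c) :
    √(c * (c + a)) ∈ Ioo c (c + a) := by
  constructor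
  · exact Real.lt_sqrt_of_sq_lt (by nlinarith)
  · exact (Real.sqrt_lt' (by linarith)).2 (by nlinarith)

theorem piStar_mem_Ioo (ha : 0 < a) (hc : 0 < c) : piStar a c ∈ Ioo (0 : ℝ) 1 := by
  obtain ⟨hlt, hgt⟩ := sqrt_mul_add_mem_Ioo ha hc
  exact ⟨div_pos (by linarith) ha, (div_lt_one ha).2 (by linarith)⟩

theorem Jobj_eq_sub_sq (ha : a ≠ 0) (hca : 0 ≤ c * (c + a)) {π : ℝ}
    (hπ : a * π + c ≠ 0) :
    Jobj a c π = (a + 2 * c - 2 * √(c * (c + a))) / a ^ 2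
      - (a * π + c - √(c * (c + a))) ^ 2 / (a ^ 2 * (a * π + c)) := by
  have hs : √(c * (c + a)) ^ 2 = c * (c + a) := Real.sq_sqrt hca
  rw [Jobj, eq_sub_iff_add_eq, div_add_div _ _ hπ (by positivity), div_eq_div_iff
    (by positivity) (by positivity)]
  linear_combination a ^ 2 * (a * π + c) * hs

theorem Jobj_lt_Jobj_piStar (ha : 0 < a) (hc : 0 < c) {π : ℝ} (hπ : 0 < a * π + c)
    (hne : π ≠ piStar a c) : Jobj a c π < Jobj a c (piStar a c) := by
  have hca : 0 ≤ c * (c + a) := by positivity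
  have hstar : a * piStar a c + c = √(c * (c + a)) := mul_piStar_add ha.ne'
  have hoff : a * π + c - √(c * (c + a)) ≠ 0 := by
    rw [← hstar, add_sub_add_right_eq_sub, ← mul_sub]
    exact mul_ne_zero ha.ne' (sub_ne_zero.2 hne)
  rw [Jobj_eq_sub_sq ha.ne' hca hπ.ne', Jobj_eq_sub_sq ha.ne' hca (by rw [hstar]; positivity),
    hstar, sub_self, zero_pow two_ne_zero, zero_div, sub_lt_sub_iff_left]
  exact div_pos (sq_pos_of_ne_zero hoff) (by positivity)

theorem piStar_eq_sqrt_div (ha : 0 < a) (hc : 0 ≤ c) :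
    piStar a c = √c / (√(c + a) + √c) := by
  have hden : 0 < √(c + a) + √c := by positivity
  have hca : √(c * (c + a)) = √c * √(c + a) := Real.sqrt_mul hc _
  rw [piStar, hca, div_eq_div_iff ha.ne' hden.ne']
  linear_combination √c * Real.sq_sqrt (by linarith : 0 ≤ c + a) + √(c + a) * Real.sq_sqrt hc

theorem piStar_eq_sqrt_one_sub (ha : 0 < a) (hc : 0 ≤ c) :
    piStar a c = √(1 - a / (a + c)) / (1 + √(1 - a / (a + c))) := by
  have hac : 0 < a + c := by linarith
  have hτ : √(1 - a / (a + c)) = √c / √(c + a) := by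
    rw [one_sub_div hac.ne', add_sub_cancel_left, add_comm, Real.sqrt_div' _ (by linarith)]
  rw [hτ, piStar_eq_sqrt_div ha hc, one_add_div (by positivity), div_div_div_cancel_right₀
    (by positivity)]

end

theorem fobj_eq_mul_sqrt_Jobj {h γ c π : ℝ} (hc : 0 ≤ c) (hπ : 0 < π) :
    fobj h γ c π = h ^ 2 * γ * √(Jobj (h ^ 2 * γ ^ 2) c π) := by
  have hJ : Jobj (h ^ 2 * γ ^ 2) c π = (1 - π) / (h ^ 2 * γ ^ 2 + c / π) := by
    rw [Jobj, add_div' _ _ _ hπ.ne', div_div_eq_mul_div, mul_comm π]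
  rw [hJ, Real.sqrt_div' _ (by positivity), fobj]
  ring

theorem fobj_lt_fobj_of_Jobj_lt {h γ c π π' : ℝ} (hh : h ≠ 0) (hγ : 0 < γ) (hc : 0 ≤ c)
    (hπ : π ∈ Ioo (0 : ℝ) 1) (hπ' : 0 < π')
    (hJ : Jobj (h ^ 2 * γ ^ 2) c π < Jobj (h ^ 2 * γ ^ 2) c π') :
    fobj h γ c π < fobj h γ c π' := by
  have hJ0 : 0 ≤ Jobj (h ^ 2 * γ ^ 2) c π :=
    div_nonneg (mul_nonneg hπ.1.le (sub_nonneg.2 hπ.2.le)) (by have := hπ.1; positivity)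
  rw [fobj_eq_mul_sqrt_Jobj hc hπ.1, fobj_eq_mul_sqrt_Jobj hc hπ']
  exact mul_lt_mul_of_pos_left (Real.sqrt_lt_sqrt hJ0 hJ) (by positivity)

theorem optimal_split_proportion
    (h γ c : ℝ) (hh : 0 < h) (hγ : 0 < γ) (hc : 0 < c) :
    piStar (h ^ 2 * γ ^ 2) c ∈ Set.Ioo (0 : ℝ) 1 ∧
    (∀ π ∈ Set.Ioo (0 : ℝ) 1, π ≠ piStar (h ^ 2 * γ ^ 2) c →
      Jobj (h ^ 2 * γ ^ 2) c π < Jobj (h ^ 2 * γ ^ 2) c (piStar (h ^ 2 * γ ^ 2) c)) ∧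
    (h ^ 2 * γ ^ 2 / (h ^ 2 * γ ^ 2 + c) ∈ Set.Ioo (0 : ℝ) 1 ∧
      piStar (h ^ 2 * γ ^ 2) c
        = Real.sqrt (1 - h ^ 2 * γ ^ 2 / (h ^ 2 * γ ^ 2 + c))
            / (1 + Real.sqrt (1 - h ^ 2 * γ ^ 2 / (h ^ 2 * γ ^ 2 + c)))) ∧
    (∀ π ∈ Set.Ioo (0 : ℝ) 1, π ≠ piStar (h ^ 2 * γ ^ 2) c →
      fobj h γ c π < fobj h γ c (piStar (h ^ 2 * γ ^ 2) c)) := by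
  have ha : 0 < h ^ 2 * γ ^ 2 := by positivity
  have hmem := piStar_mem_Ioo ha hc
  have hJ : ∀ π ∈ Ioo (0 : ℝ) 1, π ≠ piStar (h ^ 2 * γ ^ 2) c →
      Jobj (h ^ 2 * γ ^ 2) c π < Jobj (h ^ 2 * γ ^ 2) c (piStar (h ^ 2 * γ ^ 2) c) :=
    fun π hπ hne => Jobj_lt_Jobj_piStar ha hc (by have := hπ.1; positivity) hne
  refine ⟨hmem, hJ, ⟨⟨by positivity, (div_lt_one (by positivity)).2 (by linarith)⟩,
    piStar_eq_sqrt_one_sub ha hc.le⟩, fun π hπ hne => ?_⟩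
  exact fobj_lt_fobj_of_Jobj_lt hh.ne' hγ hc.le hπ hmem.1 (hJ π hπ hne)
end

section
/- Weak law of large numbers for bounded arrays: Let {X_{n,i}}_{i=1}^n be a triangular array of real random variables with |X_{n,i}| ≤ B almost surely for all i, n, for some constant B > 0. Suppose the array (X_{n,1},…,X_{n,n}) is conditionally exchangeable given a σ-algebra F_n, and that for every i ≠ j the conditional covariance Cov(X_{n,i}, X_{n,j} | F_n) → 0 in probability as n → ∞. Then (1/n)Σ_{i=1}^n X_{n,i} − E[(1/n)Σ_{i=1}^n X_{n,i} | F_n] → 0 in probability. -/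
/-!
Let `T` be the sample mean and `Dᵢ = Xᵢ - E[Xᵢ | F]`, so that `T - E[T | F] = n⁻¹ ∑ Dᵢ`. By
Chebyshev it suffices that `E[(n⁻¹ ∑ Dᵢ)²] = n⁻² ∑ᵢ ∑ⱼ E[Dᵢ Dⱼ] → 0`. Each `E[Dᵢ Dⱼ]` is
`E[Cov(Xᵢ, Xⱼ | F)]`; the `n` diagonal terms are at most `B²`, and by conditional exchangeability
every off-diagonal term equals `E[Cov(X₀, X₁ | F)]`. Hence the second moment is at most
`B² / n + E|Cov(X₀, X₁ | F)|`, and the last term tends to `0` because this conditional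
covariance is bounded by `2B²` and tends to `0` in probability.
-/

open MeasureTheory Filter Topology ProbabilityTheory

section

variable {Ω : Type*} {m m₀ : MeasurableSpace Ω} {μ : Measure[m₀] Ω}

noncomputable def condCov (μ : Measure[m₀] Ω) (m : MeasurableSpace Ω) (f g : Ω → ℝ) : Ω → ℝ :=
  μ[f * g | m] - μ[f | m] * μ[g | m]

lemma stronglyMeasurable_condCov {f g : Ω → ℝ} : StronglyMeasurable[m] (condCov μ m f g) :=
  stronglyMeasurable_condExp.sub (stronglyMeasurable_condExp.mul stronglyMeasurable_condExp)

lemma ae_abs_condCov_le {f g : Ω → ℝ} {B : ℝ} (hf : ∀ᵐ ω ∂μ, |f ω| ≤ B)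
    (hg : ∀ᵐ ω ∂μ, |g ω| ≤ B) : ∀ᵐ ω ∂μ, |condCov μ m f g ω| ≤ 2 * B ^ 2 := by
  have hfg : ∀ᵐ ω ∂μ, |(f * g) ω| ≤ B ^ 2 := by
    filter_upwards [hf, hg] with ω hfω hgω
    rw [Pi.mul_apply, abs_mul, sq]
    exact mul_le_mul hfω hgω (abs_nonneg _) ((abs_nonneg _).trans hfω)
  filter_upwards [ae_bdd_abs_condExp_of_ae_bdd_abs (m := m) hfg,
    ae_bdd_abs_condExp_of_ae_bdd_abs (m := m) hf, ae_bdd_abs_condExp_of_ae_bdd_abs (m := m) hg]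
    with ω h₁ h₂ h₃
  calc |condCov μ m f g ω| ≤ |(μ[f * g | m]) ω| + |(μ[f | m]) ω| * |(μ[g | m]) ω| := by
        rw [← abs_mul]; exact abs_sub _ _
    _ ≤ B ^ 2 + B * B := by gcongr; exact (abs_nonneg _).trans h₂
    _ = 2 * B ^ 2 := by ring

section L2
variable {f g : Ω → ℝ}

lemma integrable_condCov (hf : MemLp f 2 μ) (hg : MemLp g 2 μ) : Integrable (condCov μ m f g) μ :=
  integrable_condExp.sub ((hf.condExp one_le_two).integrable_mul (hg.condExp one_le_two))

variable [IsFiniteMeasure μ]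

lemma integral_condExp_mul (hm : m ≤ m₀) (hf : MemLp f 2 μ) (hg : MemLp g 2 μ) :
    ∫ ω, (μ[f | m]) ω * g ω ∂μ = ∫ ω, (μ[f | m]) ω * (μ[g | m]) ω ∂μ :=
  calc ∫ ω, (μ[f | m] * g) ω ∂μ = ∫ ω, (μ[μ[f | m] * g | m]) ω ∂μ := (integral_condExp hm).symm
    _ = ∫ ω, (μ[f | m] * μ[g | m]) ω ∂μ :=
      integral_congr_ae <| condExp_mul_of_stronglyMeasurable_left stronglyMeasurable_condExp
        ((hf.condExp one_le_two).integrable_mul hg) (hg.integrable one_le_two)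

lemma integral_sub_condExp_mul_sub_condExp (hm : m ≤ m₀) (hf : MemLp f 2 μ) (hg : MemLp g 2 μ) :
    ∫ ω, (f ω - (μ[f | m]) ω) * (g ω - (μ[g | m]) ω) ∂μ = ∫ ω, condCov μ m f g ω ∂μ := by
  have hf' := hf.condExp (m := m) one_le_two
  have hg' := hg.condExp (m := m) one_le_two
  have hgf : ∫ ω, f ω * (μ[g | m]) ω ∂μ = ∫ ω, (μ[f | m]) ω * (μ[g | m]) ω ∂μ := by
    simp_rw [mul_comm (f _), integral_condExp_mul hm hg hf, mul_comm]
  calc ∫ ω, (f ω - (μ[f | m]) ω) * (g ω - (μ[g | m]) ω) ∂μ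
      = ∫ ω, f ω * g ω ∂μ - ∫ ω, f ω * (μ[g | m]) ω ∂μ
          - (∫ ω, (μ[f | m]) ω * g ω ∂μ - ∫ ω, (μ[f | m]) ω * (μ[g | m]) ω ∂μ) := by
        have hfg : Integrable (fun ω => f ω * g ω) μ := hf.integrable_mul hg
        have hfEg : Integrable (fun ω => f ω * (μ[g | m]) ω) μ := hf.integrable_mul hg'
        have hEfg : Integrable (fun ω => (μ[f | m]) ω * g ω) μ := hf'.integrable_mul hg
        have hEfEg : Integrable (fun ω => (μ[f | m]) ω * (μ[g | m]) ω) μ := hf'.integrable_mul hg'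
        simp_rw [sub_mul, mul_sub]
        rw [integral_sub, integral_sub hfg hfEg, integral_sub hEfg hEfEg]
        exacts [hfg.sub hfEg, hEfg.sub hEfEg]
    _ = ∫ ω, (μ[f * g | m]) ω ∂μ - ∫ ω, (μ[f | m]) ω * (μ[g | m]) ω ∂μ := by
        rw [integral_condExp hm, integral_condExp_mul hm hf hg, hgf, sub_self, sub_zero]; rfl
    _ = ∫ ω, condCov μ m f g ω ∂μ :=
        (integral_sub integrable_condExp (hf'.integrable_mul hg')).symm

lemma integral_sub_condExp_sq_le (hm : m ≤ m₀) (hf : MemLp f 2 μ) :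
    ∫ ω, (f ω - (μ[f | m]) ω) ^ 2 ∂μ ≤ ∫ ω, f ω ^ 2 ∂μ :=
  calc ∫ ω, (f ω - (μ[f | m]) ω) ^ 2 ∂μ = ∫ ω, Var[f; μ | m] ω ∂μ := (integral_condExp hm).symm
    _ ≤ ∫ ω, (μ[f ^ 2 | m]) ω ∂μ :=
        integral_mono_ae integrable_condVar integrable_condExp (condVar_ae_le_condExp_sq hm hf)
    _ = ∫ ω, f ω ^ 2 ∂μ := integral_condExp hm

end L2

lemma measureReal_lt_abs_le_integral_sq_div [IsFiniteMeasure μ] {f : Ω → ℝ}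
    (hf : Integrable (fun ω => f ω ^ 2) μ) {ε : ℝ} (hε : 0 < ε) :
    μ.real {ω | ε < |f ω|} ≤ (∫ ω, f ω ^ 2 ∂μ) / ε ^ 2 := by
  have hsub : {ω | ε < |f ω|} ⊆ {ω | ε ^ 2 ≤ f ω ^ 2} := fun ω (hω : ε < |f ω|) => by
    show ε ^ 2 ≤ f ω ^ 2
    simpa only [sq_abs] using pow_le_pow_left₀ hε.le hω.le 2
  rw [le_div_iff₀ (by positivity), mul_comm]
  exact (mul_le_mul_of_nonneg_left (measureReal_mono hsub) (sq_nonneg ε)).trans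
    (mul_meas_ge_le_integral_of_nonneg (Eventually.of_forall fun ω => sq_nonneg (f ω)) hf _)

lemma average_sub_condExp_average_ae_eq {ι : Type*} {s : Finset ι} {X : ι → Ω → ℝ}
    (hX : ∀ i ∈ s, Integrable (X i) μ) (c : ℝ) :
    (fun ω => (∑ i ∈ s, X i ω) / c - (μ[fun ω' => (∑ i ∈ s, X i ω') / c | m]) ω)
      =ᵐ[μ] fun ω => (∑ i ∈ s, (X i ω - (μ[X i | m]) ω)) / c := by
  have havg : (fun ω => (∑ i ∈ s, X i ω) / c) = c⁻¹ • ∑ i ∈ s, X i := by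
    ext ω; simp [Finset.sum_apply, div_eq_inv_mul]
  filter_upwards [condExp_smul (m := m) (μ := μ) c⁻¹ (∑ i ∈ s, X i), condExp_finsetSum hX m]
    with ω h₁ h₂
  rw [havg, h₁, Pi.smul_apply, h₂, Finset.sum_apply, smul_eq_mul, Finset.sum_sub_distrib]
  ring

lemma integral_sq_average_le [IsFiniteMeasure μ] {n : ℕ} {D : ℕ → Ω → ℝ}
    (hD : ∀ i < n, MemLp (D i) 2 μ) {a b : ℝ} (hb : 0 ≤ b)
    (hdiag : ∀ i < n, ∫ ω, D i ω ^ 2 ∂μ ≤ a)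
    (hoff : ∀ i < n, ∀ j < n, i ≠ j → ∫ ω, D i ω * D j ω ∂μ ≤ b) :
    ∫ ω, ((∑ i ∈ Finset.range n, D i ω) / n) ^ 2 ∂μ ≤ a / n + b := by
  rcases n.eq_zero_or_pos with rfl | hn
  · simpa using hb
  have hint : ∀ i ∈ Finset.range n, ∀ j ∈ Finset.range n,
      Integrable (fun ω => D i ω * D j ω) μ := fun i hi j hj =>
    (hD i (Finset.mem_range.1 hi)).integrable_mul (hD j (Finset.mem_range.1 hj))
  have hterm : ∀ i ∈ Finset.range n, ∀ j ∈ Finset.range n,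
      ∫ ω, D i ω * D j ω ∂μ ≤ (if i = j then a else 0) + b := by
    intro i hi j hj
    rw [Finset.mem_range] at hi hj
    split_ifs with hij
    · subst hij; simpa [← sq] using hdiag i hi |>.trans (le_add_of_nonneg_right hb)
    · simpa using hoff i hi j hj hij
  calc ∫ ω, ((∑ i ∈ Finset.range n, D i ω) / n) ^ 2 ∂μ
      = (∑ i ∈ Finset.range n, ∑ j ∈ Finset.range n, ∫ ω, D i ω * D j ω ∂μ) / n ^ 2 := by
        simp_rw [div_pow, sq, Finset.sum_mul_sum]
        rw [integral_div, integral_finsetSum _ fun i hi => integrable_finsetSum _ (hint i hi)]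
        congr 1
        exact Finset.sum_congr rfl fun i hi => integral_finsetSum _ (hint i hi)
    _ ≤ (∑ i ∈ Finset.range n, ∑ j ∈ Finset.range n, ((if i = j then a else 0) + b)) / n ^ 2 := by
        gcongr with i hi j hj
        exact hterm i hi j hj
    _ = a / n + b := by
        have hrow : ∀ i ∈ Finset.range n,
            ∑ j ∈ Finset.range n, ((if i = j then a else 0) + b) = a + n * b := fun i hi => by
          rw [Finset.sum_add_distrib, Finset.sum_ite_eq, if_pos hi, Finset.sum_const,
            Finset.card_range, nsmul_eq_mul]
        rw [Finset.sum_congr rfl hrow, Finset.sum_const, Finset.card_range, nsmul_eq_mul]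
        field_simp

lemma exists_perm_apply_zero_apply_one {n i j : ℕ} (hi : i < n) (hj : j < n) (hij : i ≠ j) :
    ∃ σ : Equiv.Perm ℕ, (∀ k, n ≤ k → σ k = k) ∧ σ 0 = i ∧ σ 1 = j := by
  refine ⟨Equiv.swap 1 (Equiv.swap 0 i j) |>.trans (Equiv.swap 0 i), fun k hk => ?_, ?_, ?_⟩ <;>
    grind

def CondExchangeable (μ : Measure[m₀] Ω) (m : MeasurableSpace Ω) (n : ℕ) (X : ℕ → Ω → ℝ) :
    Prop :=
  ∀ σ : Equiv.Perm ℕ, (∀ k, n ≤ k → σ k = k) →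
    ∀ g : (ℕ → ℝ) → ℝ, Measurable g → (∀ w, |g w| ≤ 1) →
      μ[(fun ω => g (fun i => X (σ i) ω)) | m] =ᵐ[μ] μ[(fun ω => g (fun i => X i ω)) | m]

namespace CondExchangeable

variable {n : ℕ} {X : ℕ → Ω → ℝ}

lemma condExp_comp_perm (hX : CondExchangeable μ m n X) {σ : Equiv.Perm ℕ}
    (hσ : ∀ k, n ≤ k → σ k = k) {g : (ℕ → ℝ) → ℝ} (hg : Measurable g) {C : ℝ}
    (hgC : ∀ w, |g w| ≤ C) :
    μ[(fun ω => g (fun i => X (σ i) ω)) | m] =ᵐ[μ] μ[(fun ω => g (fun i => X i ω)) | m] := by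
  set c := max C 1
  have hc : 0 < c := lt_max_of_lt_right one_pos
  have hscale : ∀ Y : ℕ → Ω → ℝ,
      (fun ω => g (fun i => Y i ω)) = c • fun ω => g (fun i => Y i ω) / c := fun Y => by
    ext ω; simp [mul_div_cancel₀ _ hc.ne']
  have h := hX σ hσ (fun w => g w / c) (hg.div_const c) fun w => by
    rw [abs_div, abs_of_pos hc, div_le_one hc]; exact (hgC w).trans (le_max_left C 1)
  rw [hscale (fun i => X (σ i)), hscale X]
  exact (condExp_smul c _ m).trans <| (h.const_smul c).trans (condExp_smul c _ m).symm

lemma condExp_comp_pair (hX : CondExchangeable μ m n X) {B : ℝ} (hB : 0 ≤ B)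
    (hXB : ∀ k < n, ∀ᵐ ω ∂μ, |X k ω| ≤ B) {φ : ℝ → ℝ → ℝ} (hφ : Measurable (Function.uncurry φ))
    {C : ℝ} (hφC : ∀ x y, |x| ≤ B → |y| ≤ B → |φ x y| ≤ C) {i j : ℕ} (hi : i < n) (hj : j < n)
    (hij : i ≠ j) :
    μ[(fun ω => φ (X i ω) (X j ω)) | m] =ᵐ[μ] μ[(fun ω => φ (X 0 ω) (X 1 ω)) | m] := by
  obtain ⟨σ, hσ, hσ0, hσ1⟩ := exists_perm_apply_zero_apply_one hi hj hij
  -- truncating at `B` makes the test function bounded and changes nothing almost surely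
  set t : ℝ → ℝ := fun x => max (-B) (min B x)
  have ht : Measurable t := measurable_const.max (measurable_const.min measurable_id)
  have htB : ∀ x, |t x| ≤ B := fun x =>
    abs_le.2 ⟨le_max_left _ _, max_le (by linarith) (min_le_left _ _)⟩
  have htX : ∀ k < n, ∀ᵐ ω ∂μ, t (X k ω) = X k ω := fun k hk => by
    filter_upwards [hXB k hk] with ω hω
    rw [abs_le] at hω
    simp only [t, min_eq_right hω.2, max_eq_right hω.1]
  have key := hX.condExp_comp_perm hσ (g := fun w => φ (t (w 0)) (t (w 1)))
    (hφ.comp ((ht.comp (measurable_pi_apply 0)).prodMk (ht.comp (measurable_pi_apply 1))))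
    fun w => hφC _ _ (htB _) (htB _)
  simp only [hσ0, hσ1] at key
  refine (condExp_congr_ae ?_).trans (key.trans (condExp_congr_ae ?_))
  · filter_upwards [htX i hi, htX j hj] with ω h₁ h₂
    rw [h₁, h₂]
  · filter_upwards [htX 0 (by omega), htX 1 (by omega)] with ω h₁ h₂
    rw [h₁, h₂]

lemma condCov_ae_eq (hX : CondExchangeable μ m n X) {B : ℝ} (hB : 0 ≤ B)
    (hXB : ∀ k < n, ∀ᵐ ω ∂μ, |X k ω| ≤ B) {i j : ℕ} (hi : i < n) (hj : j < n) (hij : i ≠ j) :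
    condCov μ m (X i) (X j) =ᵐ[μ] condCov μ m (X 0) (X 1) := by
  have hmul := hX.condExp_comp_pair hB hXB (φ := (· * ·)) (measurable_fst.mul measurable_snd)
    (fun x y hx hy => by rw [abs_mul]; exact mul_le_mul hx hy (abs_nonneg _) hB) hi hj hij
  have hfst := hX.condExp_comp_pair hB hXB (φ := fun x _ => x) measurable_fst
    (fun _ _ hx _ => hx) hi hj hij
  have hsnd := hX.condExp_comp_pair hB hXB (φ := fun _ y => y) measurable_snd
    (fun _ _ _ hy => hy) hi hj hij
  exact hmul.sub (hfst.mul hsnd)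

lemma measureReal_lt_abs_average_sub_condExp_le [IsProbabilityMeasure μ] (hm : m ≤ m₀)
    (hX : CondExchangeable μ m n X) (hXm : ∀ i < n, AEStronglyMeasurable (X i) μ) {B : ℝ}
    (hB : 0 ≤ B) (hXB : ∀ i < n, ∀ᵐ ω ∂μ, |X i ω| ≤ B) {ε : ℝ} (hε : 0 < ε) :
    μ.real {ω | ε < |(∑ i ∈ Finset.range n, X i ω) / n
        - (μ[fun ω' => (∑ i ∈ Finset.range n, X i ω') / n | m]) ω|}
      ≤ (B ^ 2 / n + ∫ ω, |condCov μ m (X 0) (X 1) ω| ∂μ) / ε ^ 2 := by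
  have hL2 : ∀ i < n, MemLp (X i) 2 μ := fun i hi => MemLp.of_bound (hXm i hi) B (hXB i hi)
  set D : ℕ → Ω → ℝ := fun i => X i - μ[X i | m]
  have hD : ∀ i < n, MemLp (D i) 2 μ := fun i hi => (hL2 i hi).sub ((hL2 i hi).condExp one_le_two)
  have hcentered := average_sub_condExp_average_ae_eq (μ := μ) (m := m) (s := Finset.range n)
    (fun i hi => (hL2 i (Finset.mem_range.1 hi)).integrable one_le_two) n
  have hdiag : ∀ i < n, ∫ ω, D i ω ^ 2 ∂μ ≤ B ^ 2 := fun i hi =>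
    calc ∫ ω, D i ω ^ 2 ∂μ ≤ ∫ ω, X i ω ^ 2 ∂μ := integral_sub_condExp_sq_le hm (hL2 i hi)
      _ ≤ ∫ _, B ^ 2 ∂μ := by
          refine integral_mono_ae (hL2 i hi).integrable_sq (integrable_const _) ?_
          filter_upwards [hXB i hi] with ω hω
          exact sq_le_sq' (abs_le.1 hω).1 (abs_le.1 hω).2
      _ = B ^ 2 := by simp
  have hoff : ∀ i < n, ∀ j < n, i ≠ j →
      ∫ ω, D i ω * D j ω ∂μ ≤ ∫ ω, |condCov μ m (X 0) (X 1) ω| ∂μ := fun i hi j hj hij =>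
    have hcov01 := integrable_condCov (m := m) (hL2 0 (by omega)) (hL2 1 (by omega))
    calc ∫ ω, D i ω * D j ω ∂μ = ∫ ω, condCov μ m (X i) (X j) ω ∂μ :=
          integral_sub_condExp_mul_sub_condExp hm (hL2 i hi) (hL2 j hj)
      _ = ∫ ω, condCov μ m (X 0) (X 1) ω ∂μ :=
          integral_congr_ae (hX.condCov_ae_eq hB hXB hi hj hij)
      _ ≤ ∫ ω, |condCov μ m (X 0) (X 1) ω| ∂μ :=
          integral_mono hcov01 hcov01.abs fun _ => le_abs_self _
  have hsum : MemLp (fun ω => (∑ i ∈ Finset.range n, D i ω) / n) 2 μ :=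
    by simpa only [div_eq_mul_inv] using
      (memLp_finsetSum _ fun i hi => hD i (Finset.mem_range.1 hi)).mul_const (n : ℝ)⁻¹
  calc _ ≤ (∫ ω, ((∑ i ∈ Finset.range n, X i ω) / n
          - (μ[fun ω' => (∑ i ∈ Finset.range n, X i ω') / n | m]) ω) ^ 2 ∂μ) / ε ^ 2 :=
        measureReal_lt_abs_le_integral_sq_div
          (hsum.integrable_sq.congr (hcentered.fun_comp (· ^ 2)).symm) hε
    _ = (∫ ω, ((∑ i ∈ Finset.range n, D i ω) / n) ^ 2 ∂μ) / ε ^ 2 := by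
        congr 1
        exact integral_congr_ae (hcentered.fun_comp (· ^ 2))
    _ ≤ _ := by
        gcongr
        exact integral_sq_average_le hD (integral_nonneg fun _ => abs_nonneg _) hdiag hoff

end CondExchangeable

lemma integral_abs_le_add_mul_measureReal [IsProbabilityMeasure μ] {f : Ω → ℝ} (hf : Measurable f)
    {C η : ℝ} (hη : 0 ≤ η) (hC : ∀ᵐ ω ∂μ, |f ω| ≤ C) :
    ∫ ω, |f ω| ∂μ ≤ η + C * μ.real {ω | η < |f ω|} := by
  set s := {ω | η < |f ω|}
  have hs : MeasurableSet s := measurableSet_lt measurable_const hf.abs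
  calc ∫ ω, |f ω| ∂μ ≤ ∫ ω, (η + s.indicator (fun _ => C) ω) ∂μ := by
        refine integral_mono_ae (Integrable.of_bound hf.abs.aestronglyMeasurable C
          (by simpa using hC)) ((integrable_const η).add ((integrable_const C).indicator hs)) ?_
        filter_upwards [hC] with ω hω
        by_cases hωs : ω ∈ s
        · simpa [hωs] using hω.trans (le_add_of_nonneg_left hη)
        · rw [Set.indicator_of_notMem hωs, add_zero]
          exact not_lt.1 hωs
    _ = η + C * μ.real s := by
        rw [integral_add (integrable_const η) ((integrable_const C).indicator hs), integral_const,
          integral_indicator_const C hs]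
        simp [mul_comm]

end

lemma tendsto_integral_abs_of_tendsto_measureReal {Ω : ℕ → Type*} {mΩ : ∀ n, MeasurableSpace (Ω n)}
    {μ : ∀ n, Measure[mΩ n] (Ω n)} [∀ n, IsProbabilityMeasure (μ n)] {f : ∀ n, Ω n → ℝ}
    (hf : ∀ n, Measurable (f n)) {C : ℝ} (hC : ∀ᶠ n in atTop, ∀ᵐ ω ∂μ n, |f n ω| ≤ C)
    (hlim : ∀ ε > 0, Tendsto (fun n => (μ n).real {ω | ε < |f n ω|}) atTop (𝓝 0)) :
    Tendsto (fun n => ∫ ω, |f n ω| ∂μ n) atTop (𝓝 0) := by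
  refine tendsto_order.2 ⟨fun a ha => Eventually.of_forall fun n =>
    ha.trans_le (integral_nonneg fun _ => abs_nonneg _), fun a ha => ?_⟩
  have hsmall : ∀ᶠ n in atTop, C * (μ n).real {ω | a / 2 < |f n ω|} < a / 2 := by
    have h := (hlim (a / 2) (half_pos ha)).const_mul C
    rw [mul_zero] at h
    exact h.eventually_lt_const (half_pos ha)
  filter_upwards [hC, hsmall] with n hCn hn
  linarith [integral_abs_le_add_mul_measureReal (hf n) (half_pos ha).le hCn]

theorem wlln_bounded_conditionally_exchangeable
    (Ω : ℕ → Type*) [inst : ∀ n, MeasurableSpace (Ω n)]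
    (μ : ∀ n, Measure (Ω n)) [∀ n, IsProbabilityMeasure (μ n)]
    (F : ∀ n, MeasurableSpace (Ω n)) (hF : ∀ n, F n ≤ inst n)
    (X : ∀ n, ℕ → Ω n → ℝ)
    (hmeas : ∀ n i, Measurable (X n i))
    (B : ℝ) (hB : 0 < B)
    (hbdd : ∀ n, ∀ i < n, ∀ᵐ ω ∂(μ n), |X n i ω| ≤ B)
    -- conditional exchangeability of `(X_{n,0}, …, X_{n,n-1})` given `F n`
    (hexch : ∀ n, ∀ σ : Equiv.Perm ℕ, (∀ k, n ≤ k → σ k = k) →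
      ∀ g : (ℕ → ℝ) → ℝ, Measurable g → (∀ w, |g w| ≤ 1) →
        (μ n)[(fun ω => g (fun i => X n (σ i) ω)) | F n]
          =ᵐ[μ n] (μ n)[(fun ω => g (fun i => X n i ω)) | F n])
    -- vanishing conditional covariances
    (hcov : ∀ i j : ℕ, i ≠ j → ∀ ε > (0 : ℝ),
      Tendsto (fun n => ((μ n) {ω | ε <
          |((μ n)[(fun ω' => X n i ω' * X n j ω') | F n]) ω
            - ((μ n)[X n i | F n]) ω * ((μ n)[X n j | F n]) ω|}).toReal)
        atTop (nhds 0)) :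
    ∀ ε > (0 : ℝ),
      Tendsto (fun n => ((μ n) {ω | ε <
          |(∑ i ∈ Finset.range n, X n i ω) / n
            - ((μ n)[(fun ω' => (∑ i ∈ Finset.range n, X n i ω') / n) | F n]) ω|}).toReal)
        atTop (nhds 0) := by
  intro ε hε
  have hK := tendsto_integral_abs_of_tendsto_measureReal
      (f := fun n => condCov (μ n) (F n) (X n 0) (X n 1))
      (fun n => (stronglyMeasurable_condCov.mono (hF n)).measurable)
      ((eventually_ge_atTop 2).mono fun n hn =>
        ae_abs_condCov_le (hbdd n 0 (by omega)) (hbdd n 1 (by omega)))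
      (hcov 0 1 zero_ne_one)
  have hbound := ((tendsto_const_div_atTop_nhds_zero_nat (B ^ 2)).add hK).div_const (ε ^ 2)
  rw [add_zero, zero_div] at hbound
  -- `F n` is the last `MeasurableSpace` instance in scope, so `hmeas` is measurability for `F n`
  exact tendsto_of_tendsto_of_tendsto_of_le_of_le tendsto_const_nhds hbound
    (fun n => ENNReal.toReal_nonneg) fun n =>
      CondExchangeable.measureReal_lt_abs_average_sub_condExp_le (hF n) (hexch n)
        (fun i _ => ((hmeas n i).mono (hF n) le_rfl).aestronglyMeasurable) hB.le (hbdd n) hε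
end

section
/- Consistency of the generalized left inverse under monotonicity: Let (φ_n) be random functions ℝ → ℝ and let φ : ℝ → ℝ be deterministic, continuous, and strictly decreasing. Assume that for every C ∈ ℝ, sup_{x < C} |φ_n(x) − φ(x)| → 0 in probability. Fix a level t that is attained by φ, and let θ := inf{x ∈ ℝ : φ(x) ≤ t} < ∞. Then the random generalized left inverse φ_n⁻(t) := inf{x ∈ ℝ : φ_n(x) ≤ t} converges in probability to θ. -/
/-!
If `φ(θ) = t`, strict monotonicity makes `θ` the exact left inverse of `t`, and
`ε := min (φ(θ - δ) - t) (t - φ(θ + δ)) > 0`. A sample point whose left inverse misses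
`[θ - δ, θ + δ]` either has some `x < θ - δ` with `φ_n(x) ≤ t < φ(x) - ε`, or has
`φ_n(θ + δ) > t > φ(θ + δ) + ε`; both are deviations larger than `ε` left of `θ + 2δ`,
whose probability tends to zero by assumption.
-/

open MeasureTheory Filter

/-- Generalized left inverse `φ⁻(t) = inf{x : φ(x) ≤ t}`, valued in the extended reals
(so the infimum of the empty set is `⊤ = ∞`). -/
noncomputable def leftInvE (φ : ℝ → ℝ) (t : ℝ) : EReal :=
  ⨅ x ∈ {x : ℝ | φ x ≤ t}, (x : EReal)

section LeftInverse

variable {ψ φ : ℝ → ℝ} {t : ℝ}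

theorem leftInvE_le {x : ℝ} (h : ψ x ≤ t) : leftInvE ψ t ≤ x :=
  iInf₂_le_of_le x h le_rfl

theorem exists_lt_of_leftInvE_lt {a : ℝ} (h : leftInvE ψ t < a) : ∃ x < a, ψ x ≤ t := by
  obtain ⟨x, hx⟩ := iInf_lt_iff.mp h
  obtain ⟨hψx, hxa⟩ := iInf_lt_iff.mp hx
  exact ⟨x, EReal.coe_lt_coe_iff.mp hxa, hψx⟩

theorem lt_of_lt_leftInvE {b : ℝ} (h : (b : EReal) < leftInvE ψ t) : t < ψ b := by
  by_contra! hb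
  exact (leftInvE_le hb).not_gt h

theorem sInf_setOf_le_apply (hφ : StrictAnti φ) (θ : ℝ) : sInf {x | φ x ≤ φ θ} = θ := by
  have hIci : {x | φ x ≤ φ θ} = Set.Ici θ := Set.ext fun _ => hφ.le_iff_ge
  rw [hIci, csInf_Ici]

theorem exists_deviation_of_leftInvE_far (hφ : StrictAnti φ) {θ δ : ℝ} (hδ : 0 < δ)
    (h : leftInvE ψ t < ((θ - δ : ℝ) : EReal) ∨ ((θ + δ : ℝ) : EReal) < leftInvE ψ t) :
    ∃ x < θ + 2 * δ, min (φ (θ - δ) - t) (t - φ (θ + δ)) < |ψ x - φ x| := by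
  rcases h with hlow | hhigh
  · obtain ⟨x, hxlt, hψx⟩ := exists_lt_of_leftInvE_lt hlow
    have hφx : φ (θ - δ) < φ x := hφ hxlt
    refine ⟨x, by linarith, ?_⟩
    calc min (φ (θ - δ) - t) (t - φ (θ + δ)) ≤ φ (θ - δ) - t := min_le_left _ _
      _ < φ x - ψ x := by linarith
      _ ≤ |ψ x - φ x| := by rw [abs_sub_comm]; exact le_abs_self _
  · have hψ : t < ψ (θ + δ) := lt_of_lt_leftInvE hhigh
    refine ⟨θ + δ, by linarith, ?_⟩
    calc min (φ (θ - δ) - t) (t - φ (θ + δ)) ≤ t - φ (θ + δ) := min_le_right _ _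
      _ < ψ (θ + δ) - φ (θ + δ) := by linarith
      _ ≤ |ψ (θ + δ) - φ (θ + δ)| := le_abs_self _

end LeftInverse

theorem left_inverse_consistency_general
    (Ω : ℕ → Type*) [∀ n, MeasurableSpace (Ω n)]
    (μ : ∀ n, Measure (Ω n)) [∀ n, IsProbabilityMeasure (μ n)]
    (φn : ∀ n, Ω n → ℝ → ℝ) (φ : ℝ → ℝ)
    (hφanti : StrictAnti φ)
    (hconv : ∀ C : ℝ, ∀ ε > (0 : ℝ),
      Tendsto (fun n => ((μ n) {ω | ∃ x < C, ε < |φn n ω x - φ x|}).toReal)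
        atTop (nhds 0))
    (t : ℝ) (hatt : ∃ x : ℝ, φ x = t) :
    ∀ δ > (0 : ℝ),
      Tendsto (fun n => ((μ n) {ω |
          leftInvE (φn n ω) t < ((sInf {x : ℝ | φ x ≤ t} - δ : ℝ) : EReal) ∨
          ((sInf {x : ℝ | φ x ≤ t} + δ : ℝ) : EReal) < leftInvE (φn n ω) t}).toReal)
        atTop (nhds 0) := by
  intro δ hδ
  obtain ⟨θ, rfl⟩ := hatt
  rw [sInf_setOf_le_apply hφanti θ]
  have hε : 0 < min (φ (θ - δ) - φ θ) (φ θ - φ (θ + δ)) :=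
    lt_min (sub_pos.mpr (hφanti (by linarith))) (sub_pos.mpr (hφanti (by linarith)))
  refine squeeze_zero (fun _ => ENNReal.toReal_nonneg) (fun n => ?_) (hconv (θ + 2 * δ) _ hε)
  exact ENNReal.toReal_mono (measure_ne_top _ _)
    (measure_mono fun ω hω => exists_deviation_of_leftInvE_far hφanti hδ hω)

theorem left_inverse_consistency
    (Ω : ℕ → Type*) [∀ n, MeasurableSpace (Ω n)]
    (μ : ∀ n, Measure (Ω n)) [∀ n, IsProbabilityMeasure (μ n)]
    (φn : ∀ n, Ω n → ℝ → ℝ) (φ : ℝ → ℝ)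
    (hφcont : Continuous φ) (hφanti : StrictAnti φ)
    (hconv : ∀ C : ℝ, ∀ ε > (0 : ℝ),
      Tendsto (fun n => ((μ n) {ω | ∃ x < C, ε < |φn n ω x - φ x|}).toReal)
        atTop (nhds 0))
    (t : ℝ) (hatt : ∃ x : ℝ, φ x = t) :
    ∀ δ > (0 : ℝ),
      Tendsto (fun n => ((μ n) {ω |
          leftInvE (φn n ω) t < ((sInf {x : ℝ | φ x ≤ t} - δ : ℝ) : EReal) ∨
          ((sInf {x : ℝ | φ x ≤ t} + δ : ℝ) : EReal) < leftInvE (φn n ω) t}).toReal)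
        atTop (nhds 0) :=
  left_inverse_consistency_general Ω μ φn φ hφanti hconv t hatt
end

section
/- Uniqueness of the proxy root for finite m̃ (point-mass prior): Fix C > 0, q ∈ (0,1), γ ∈ (0,1), and let μ : ℕ → ℝ satisfy μ(m̃) ≥ μ₋ for all m̃ and some constant μ₋ > 0. Define F(t; m̃) := [1/(1+m̃) + (m̃/(1+m̃))·Φ̄(t)] / [(1−γ)·Φ̄(t) + γ·Φ̄(t − μ(m̃))] − q. Then there exists m̃* ∈ ℕ such that for all m̃ > m̃*, the equation F(t; m̃) = 0 has at most one solution t ∈ (−∞, C]. Indeed, F(·; m̃) is strictly decreasing on (−∞, C] for all m̃ > m̃*. -/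
/-!
Uniqueness of the proxy root for finite m̃ (point-mass prior):
if `μ(m̃) ≥ μ₋ > 0` for all `m̃`, then there is `m̃*` such that for all `m̃ > m̃*` the proxy
FDP curve
`F(t; m̃) = [1/(1+m̃) + (m̃/(1+m̃))·Φ̄(t)] / [(1−γ)Φ̄(t) + γΦ̄(t − μ(m̃))] − q`
is strictly decreasing on `(−∞, C]`; in particular `F(·; m̃) = 0` has at most one solution
on `(−∞, C]`.
-/

open MeasureTheory ProbabilityTheory Filter

/-- The survival function `Φ̄` of the standard normal distribution. -/
noncomputable def stdNormSurvival (t : ℝ) : ℝ :=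
  ((gaussianReal 0 1) (Set.Ici t)).toReal

/-- The proxy FDP curve (minus the level `q`) for `m̃` synthetic nulls and mean shift `μ`. -/
noncomputable def proxyF (γ q μ : ℝ) (mt : ℕ) (t : ℝ) : ℝ :=
  (1 / (1 + (mt : ℝ)) + ((mt : ℝ) / (1 + (mt : ℝ))) * stdNormSurvival t) /
    ((1 - γ) * stdNormSurvival t + γ * stdNormSurvival (t - μ)) - q

/-!
Write `a = 1/(1+m̃)`, `b = m̃/(1+m̃)` and `r = φ(t-μ)/φ(t) = exp(μt - μ²/2)`. Differentiating,
`F'(t)` has the sign of `a(1-γ+γr) - bγ g(t)`, where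
`g(t) = Φ̄(t-μ) - rΦ̄(t) = ∫_t^∞ φ(x-μ)(1 - exp(-μ(x-t))) dx ≥ (1 - e^{-μ}) Φ̄(t+1-μ)`.
For `t ≤ C` and `μ ≥ μ₋` this gives `g(t) ≥ (1 - e^{-μ₋}) Φ̄(C+1-μ₋) > 0` and `r ≤ exp(C²/2)`,
so the negative term wins once `a` is small, i.e. for all large `m̃`.
-/

open Real Set

lemma gaussianPDFReal_one_eq_exp_mul (m x : ℝ) :
    gaussianPDFReal m 1 x = exp (m * x - m ^ 2 / 2) * gaussianPDFReal 0 1 x := by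
  simp only [gaussianPDFReal_def, NNReal.coe_one, mul_one, sub_zero]
  rw [mul_left_comm, ← exp_add]
  ring_nf

lemma stdNormSurvival_sub_eq_integral (m t : ℝ) :
    stdNormSurvival (t - m) = ∫ x in Ici t, gaussianPDFReal m 1 x := by
  rw [stdNormSurvival, ← preimage_add_const_Ici,
    ← Measure.map_apply (by fun_prop) measurableSet_Ici, gaussianReal_map_add_const, zero_add,
    gaussianReal_apply_eq_integral m one_ne_zero, ENNReal.toReal_ofReal
      (setIntegral_nonneg measurableSet_Ici fun x _ ↦ gaussianPDFReal_nonneg m 1 x)]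

lemma stdNormSurvival_eq_integral (t : ℝ) :
    stdNormSurvival t = ∫ x in Ici t, gaussianPDFReal 0 1 x := by
  simpa using stdNormSurvival_sub_eq_integral 0 t

lemma stdNormSurvival_pos (t : ℝ) : 0 < stdNormSurvival t := by
  refine ENNReal.toReal_pos (fun h ↦ ?_) (measure_ne_top _ _)
  simpa using gaussianReal_absolutelyContinuous' 0 one_ne_zero h

lemma stdNormSurvival_antitone : Antitone stdNormSurvival := fun _ _ hab ↦
  ENNReal.toReal_mono (measure_ne_top _ _) (measure_mono (Ici_subset_Ici.mpr hab))

lemma hasDerivAt_stdNormSurvival (t : ℝ) :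
    HasDerivAt stdNormSurvival (-gaussianPDFReal 0 1 t) t := by
  have hφ : Continuous (gaussianPDFReal 0 1) := by
    rw [gaussianPDFReal_def]; fun_prop
  have hint : ∀ u, IntegrableOn (gaussianPDFReal 0 1) (Ici u) :=
    fun u ↦ (integrable_gaussianPDFReal 0 1).integrableOn
  have hrepr : stdNormSurvival =
      fun u ↦ stdNormSurvival 0 - ∫ x in (0 : ℝ)..u, gaussianPDFReal 0 1 x := by
    funext u
    rw [← intervalIntegral.integral_Ici_sub_Ici' (hint 0) (hint u), stdNormSurvival_eq_integral,
      stdNormSurvival_eq_integral]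
    ring
  rw [hrepr]
  exact ((hφ.integral_hasStrictDerivAt 0 t).hasDerivAt).const_sub _

noncomputable def normalTailGap (m t : ℝ) : ℝ :=
  stdNormSurvival (t - m) - exp (m * t - m ^ 2 / 2) * stdNormSurvival t

lemma gaussianPDFReal_mul_one_sub_exp (m t x : ℝ) :
    gaussianPDFReal m 1 x * (1 - exp (m * (t - x))) =
      gaussianPDFReal m 1 x - exp (m * t - m ^ 2 / 2) * gaussianPDFReal 0 1 x := by
  rw [gaussianPDFReal_one_eq_exp_mul, mul_one_sub, mul_right_comm, ← exp_add]
  ring_nf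

lemma integrable_gaussianPDFReal_mul_one_sub_exp (m t : ℝ) :
    Integrable fun x ↦ gaussianPDFReal m 1 x * (1 - exp (m * (t - x))) := by
  simp_rw [gaussianPDFReal_mul_one_sub_exp]
  exact (integrable_gaussianPDFReal m 1).sub ((integrable_gaussianPDFReal 0 1).const_mul _)

lemma normalTailGap_eq_integral (m t : ℝ) :
    normalTailGap m t =
      ∫ x in Ici t, gaussianPDFReal m 1 x * (1 - exp (m * (t - x))) := by
  simp_rw [gaussianPDFReal_mul_one_sub_exp]
  rw [integral_sub (integrable_gaussianPDFReal m 1).integrableOn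
      ((integrable_gaussianPDFReal 0 1).const_mul _).integrableOn, integral_const_mul,
    ← stdNormSurvival_sub_eq_integral, ← stdNormSurvival_eq_integral, normalTailGap]

lemma mul_stdNormSurvival_le_normalTailGap {m : ℝ} (hm : 0 ≤ m) (t : ℝ) :
    (1 - exp (-m)) * stdNormSurvival (t + 1 - m) ≤ normalTailGap m t := by
  have hint := integrable_gaussianPDFReal_mul_one_sub_exp m t
  have hnonneg : ∀ x ∈ Ici t, 0 ≤ gaussianPDFReal m 1 x * (1 - exp (m * (t - x))) :=
    fun x hx ↦ mul_nonneg (gaussianPDFReal_nonneg m 1 x) (sub_nonneg.mpr (exp_le_one_iff.mpr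
      (mul_nonpos_of_nonneg_of_nonpos hm (by linarith [mem_Ici.mp hx]))))
  calc (1 - exp (-m)) * stdNormSurvival (t + 1 - m)
      = ∫ x in Ici (t + 1), gaussianPDFReal m 1 x * (1 - exp (-m)) := by
        rw [stdNormSurvival_sub_eq_integral, mul_comm, integral_mul_const]
    _ ≤ ∫ x in Ici (t + 1), gaussianPDFReal m 1 x * (1 - exp (m * (t - x))) := by
        refine setIntegral_mono_on ((integrable_gaussianPDFReal m 1).mul_const _).integrableOn
          hint.integrableOn measurableSet_Ici fun x hx ↦ ?_
        have := gaussianPDFReal_nonneg m 1 x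
        gcongr
        nlinarith [mem_Ici.mp hx]
    _ ≤ ∫ x in Ici t, gaussianPDFReal m 1 x * (1 - exp (m * (t - x))) :=
        setIntegral_mono_set hint.integrableOn
          ((ae_restrict_iff' measurableSet_Ici).mpr (ae_of_all _ hnonneg))
          (Ici_subset_Ici.mpr (by linarith)).eventuallyLE
    _ = normalTailGap m t := (normalTailGap_eq_integral m t).symm

lemma le_normalTailGap {μlo m C t : ℝ} (hμlo : 0 ≤ μlo) (hm : μlo ≤ m) (ht : t ≤ C) :
    (1 - exp (-μlo)) * stdNormSurvival (C + 1 - μlo) ≤ normalTailGap m t := by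
  refine le_trans ?_ (mul_stdNormSurvival_le_normalTailGap (hμlo.trans hm) t)
  have := stdNormSurvival_pos (C + 1 - μlo)
  have : 0 ≤ 1 - exp (-m) := sub_nonneg.mpr (exp_le_one_iff.mpr (by linarith))
  gcongr
  exact stdNormSurvival_antitone (by linarith)

lemma proxyF_denom_pos {γ : ℝ} (hγ0 : 0 ≤ γ) (hγ1 : γ ≤ 1) (m t : ℝ) :
    0 < (1 - γ) * stdNormSurvival t + γ * stdNormSurvival (t - m) := by
  calc 0 < min (stdNormSurvival t) (stdNormSurvival (t - m)) :=
        lt_min (stdNormSurvival_pos t) (stdNormSurvival_pos (t - m))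
    _ = (1 - γ) * min (stdNormSurvival t) (stdNormSurvival (t - m)) +
          γ * min (stdNormSurvival t) (stdNormSurvival (t - m)) := by ring
    _ ≤ (1 - γ) * stdNormSurvival t + γ * stdNormSurvival (t - m) := by
        have := sub_nonneg.mpr hγ1
        gcongr
        exacts [min_le_left _ _, min_le_right _ _]

lemma hasDerivAt_proxyF {γ : ℝ} (hγ0 : 0 ≤ γ) (hγ1 : γ ≤ 1) (q m : ℝ) (mt : ℕ) (t : ℝ) :
    HasDerivAt (proxyF γ q m mt)
      (gaussianPDFReal 0 1 t * (1 / (1 + mt) * (1 - γ + γ * exp (m * t - m ^ 2 / 2)) -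
          mt / (1 + mt) * γ * normalTailGap m t) /
        ((1 - γ) * stdNormSurvival t + γ * stdNormSurvival (t - m)) ^ 2) t := by
  have hshift : HasDerivAt (fun u ↦ stdNormSurvival (u - m)) (-gaussianPDFReal m 1 t) t := by
    simpa [gaussianPDFReal_sub] using (hasDerivAt_stdNormSurvival (t - m)).comp_sub_const t m
  have hnum := ((hasDerivAt_stdNormSurvival t).const_mul ((mt : ℝ) / (1 + mt))).const_add
    (1 / (1 + (mt : ℝ)))
  have hden := ((hasDerivAt_stdNormSurvival t).const_mul (1 - γ)).add (hshift.const_mul γ)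
  refine ((hnum.div hden (proxyF_denom_pos hγ0 hγ1 m t).ne').sub_const q).congr_deriv ?_
  rw [Pi.add_apply, gaussianPDFReal_one_eq_exp_mul m t, normalTailGap]
  ring

lemma strictAntiOn_proxyF {γ : ℝ} (hγ0 : 0 ≤ γ) (hγ1 : γ ≤ 1) (q m : ℝ) (mt : ℕ) {s : Set ℝ}
    (hs : Convex ℝ s)
    (h : ∀ t ∈ s, 1 / (1 + mt) * (1 - γ + γ * exp (m * t - m ^ 2 / 2)) <
      mt / (1 + mt) * γ * normalTailGap m t) :
    StrictAntiOn (proxyF γ q m mt) s := by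
  have hderiv := hasDerivAt_proxyF hγ0 hγ1 q m mt
  refine strictAntiOn_of_hasDerivWithinAt_neg hs
    (fun t _ ↦ (hderiv t).continuousAt.continuousWithinAt)
    (fun t _ ↦ (hderiv t).hasDerivWithinAt)
    fun t ht ↦ div_neg_of_neg_of_pos ?_ (pow_pos (proxyF_denom_pos hγ0 hγ1 m t) 2)
  exact mul_neg_of_pos_of_neg (gaussianPDFReal_pos 0 1 t one_ne_zero)
    (sub_neg.mpr (h t (interior_subset ht)))

theorem proxy_root_unique_point_mass_general
    (C q γ : ℝ) (hγ : γ ∈ Set.Ioo (0 : ℝ) 1)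
    (μ : ℕ → ℝ) (μlo : ℝ) (hμlo : 0 < μlo) (hμ : ∀ mt, μlo ≤ μ mt) :
    ∃ M : ℕ, ∀ mt : ℕ, M < mt →
      StrictAntiOn (proxyF γ q (μ mt) mt) (Set.Iic C) ∧
      ∀ t₁ ∈ Set.Iic C, ∀ t₂ ∈ Set.Iic C,
        proxyF γ q (μ mt) mt t₁ = 0 → proxyF γ q (μ mt) mt t₂ = 0 → t₁ = t₂ := by
  obtain ⟨hγ0, hγ1⟩ := hγ
  set δ := (1 - exp (-μlo)) * stdNormSurvival (C + 1 - μlo)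
  set R := exp (C ^ 2 / 2)
  have hδ : 0 < δ := mul_pos (by simpa using hμlo) (stdNormSurvival_pos _)
  have hsmall : ∀ᶠ mt : ℕ in atTop, 1 / (1 + (mt : ℝ)) * (1 + γ * R + γ * δ) < γ * δ := by
    have := (tendsto_one_div_add_atTop_nhds_zero_nat (𝕜 := ℝ)).mul_const (1 + γ * R + γ * δ)
    rw [zero_mul] at this
    filter_upwards [this.eventually (gt_mem_nhds (show (0 : ℝ) < γ * δ by positivity))]
      with mt h
    rwa [add_comm (1 : ℝ)]
  obtain ⟨M, hM⟩ := eventually_atTop.mp hsmall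
  refine ⟨M, fun mt hmt ↦ ?_⟩
  set m := μ mt
  have hm : μlo ≤ m := hμ mt
  have hb : (mt : ℝ) / (1 + mt) = 1 - 1 / (1 + mt) := by field_simp; ring
  have h1a : 0 ≤ 1 - 1 / (1 + (mt : ℝ)) := hb ▸ by positivity
  have hanti : StrictAntiOn (proxyF γ q m mt) (Iic C) := by
    refine strictAntiOn_proxyF hγ0.le hγ1.le q m mt (convex_Iic C) fun t ht ↦ ?_
    have hr : exp (m * t - m ^ 2 / 2) ≤ R :=
      exp_le_exp.mpr (by nlinarith [sq_nonneg (m - C), mem_Iic.mp ht])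
    have hgap := le_normalTailGap hμlo.le hm (mem_Iic.mp ht)
    calc 1 / (1 + mt) * (1 - γ + γ * exp (m * t - m ^ 2 / 2))
        ≤ 1 / (1 + mt) * (1 + γ * R) := by gcongr; linarith
      _ < (1 - 1 / (1 + mt)) * γ * δ := by linarith [hM mt hmt.le]
      _ ≤ (mt : ℝ) / (1 + mt) * γ * normalTailGap m t := by rw [hb]; gcongr
  exact ⟨hanti, fun t₁ h₁ t₂ h₂ e₁ e₂ ↦ hanti.injOn h₁ h₂ (e₁.trans e₂.symm)⟩

theorem proxy_root_unique_point_mass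
    (C q γ : ℝ) (hC : 0 < C) (hq : q ∈ Set.Ioo (0 : ℝ) 1) (hγ : γ ∈ Set.Ioo (0 : ℝ) 1)
    (μ : ℕ → ℝ) (μlo : ℝ) (hμlo : 0 < μlo) (hμ : ∀ mt, μlo ≤ μ mt) :
    ∃ M : ℕ, ∀ mt : ℕ, M < mt →
      StrictAntiOn (proxyF γ q (μ mt) mt) (Set.Iic C) ∧
      ∀ t₁ ∈ Set.Iic C, ∀ t₂ ∈ Set.Iic C,
        proxyF γ q (μ mt) mt t₁ = 0 → proxyF γ q (μ mt) mt t₂ = 0 → t₁ = t₂ :=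
  proxy_root_unique_point_mass_general C q γ hγ μ μlo hμlo hμ
end
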